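/- Let 0 < α < 2 and for t ∈ (0, 1) define u_t : [−1, 1] → ℝ by u_t(x) = max((tα − 1) − x, 0) + max(x − (1 − (1 − t)α), 0). Then for every t ∈ (0, 1): u_t is Lipschitz with constant 1; 𝓛^1({x ∈ (−1, 1) : u_t(x) > 0}) = α; u_t(−1) = tα, u_t(1) = (1 − t)α, so u_t(−1) + u_t(1) = α; and hence for every A > 0, u_t maximizes the functional v ↦ A·(v(−1) + v(1)) over all functions v : [−1, 1] → ℝ that are Lipschitz with constant 1 with 𝓛^1({x ∈ (−1, 1) : v(x) > 0}) ≤ α. Moreover u_t ≠ u_{t'} whenever t ≠ t', so the maximizer is not unique. -/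
import Mathlib


open MeasureTheory Set
open scoped ENNReal

/-- The family of limiting profiles on `Ω = (−1, 1)`:
`u_t(x) = max((tα − 1) − x, 0) + max(x − (1 − (1 − t)α), 0)`. -/
noncomputable def uEx (α t x : ℝ) : ℝ :=
  max ((t * α - 1) - x) 0 + max (x - (1 - (1 - t) * α)) 0

lemma uEx_lipschitz (α t : ℝ) : LipschitzWith 1 (uEx α t) := by
  apply LipschitzWith.of_dist_le_mul
  have key : ∀ x y : ℝ, x ≤ y →
      uEx α t x - uEx α t y ≤ y - x ∧ uEx α t y - uEx α t x ≤ y - x := by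
    intro x y hxy
    set a := t * α - 1
    set b := 1 - (1 - t) * α
    have h1 : max (a - y) 0 ≤ max (a - x) 0 := max_le_max (by linarith) le_rfl
    have h2 : max (a - x) 0 ≤ max (a - y) 0 + (y - x) := by
      apply max_le
      · have := le_max_left (a - y) (0 : ℝ); linarith
      · have := le_max_right (a - y) (0 : ℝ); linarith
    have h3 : max (x - b) 0 ≤ max (y - b) 0 := max_le_max (by linarith) le_rfl
    have h4 : max (y - b) 0 ≤ max (x - b) 0 + (y - x) := by
      apply max_le
      · have := le_max_left (x - b) (0 : ℝ); linarith
      · have := le_max_right (x - b) (0 : ℝ); linarith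
    constructor <;> · simp only [uEx]; linarith
  intro x y
  rw [Real.dist_eq, Real.dist_eq, NNReal.coe_one, one_mul]
  rcases le_total x y with h | h
  · rcases key x y h with ⟨h1, h2⟩
    rw [abs_le]
    constructor
    · have : |x - y| = y - x := by rw [abs_sub_comm, abs_of_nonneg (by linarith)]
      rw [this]; linarith
    · have : |x - y| = y - x := by rw [abs_sub_comm, abs_of_nonneg (by linarith)]
      rw [this]; linarith
  · rcases key y x h with ⟨h1, h2⟩
    rw [abs_le]
    have : |x - y| = x - y := abs_of_nonneg (by linarith)
    rw [this]
    constructor <;> linarith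

/-- Key admissibility bound: any 1-Lipschitz `v` on `[-1,1]` with
`𝓛¹({v > 0} ∩ (−1,1)) ≤ α` satisfies `v(−1) + v(1) ≤ α`. -/
lemma boundary_sum_le (α : ℝ) (hα0 : 0 < α) (hα2 : α < 2) (v : ℝ → ℝ)
    (hv : LipschitzOnWith 1 v (Icc (-1) 1))
    (hvol : volume {x ∈ Ioo (-1 : ℝ) 1 | 0 < v x} ≤ ENNReal.ofReal α) :
    v (-1) + v 1 ≤ α := by
  set p := max (v (-1)) 0 with hp
  set q := max (v 1) 0 with hq
  have hp0 : 0 ≤ p := le_max_right _ _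
  have hq0 : 0 ≤ q := le_max_right _ _
  have hmem1 : (-1 : ℝ) ∈ Icc (-1 : ℝ) 1 := by constructor <;> norm_num
  have hmem2 : (1 : ℝ) ∈ Icc (-1 : ℝ) 1 := by constructor <;> norm_num
  -- subset facts
  have hsub1 : Ioo (-1 : ℝ) (min (-1 + p) 1) ⊆ {x ∈ Ioo (-1 : ℝ) 1 | 0 < v x} := by
    intro x hx
    obtain ⟨hx1, hx2⟩ := hx
    have hxlt1 : x < 1 := lt_of_lt_of_le hx2 (min_le_right _ _)
    have hxltp : x < -1 + p := lt_of_lt_of_le hx2 (min_le_left _ _)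
    have hxmem : x ∈ Icc (-1 : ℝ) 1 := ⟨hx1.le, hxlt1.le⟩
    refine ⟨⟨hx1, hxlt1⟩, ?_⟩
    have hd := hv.dist_le_mul x hxmem (-1) hmem1
    rw [Real.dist_eq, Real.dist_eq, NNReal.coe_one, one_mul] at hd
    have habs : |x - -1| = x + 1 := by rw [abs_of_nonneg (by linarith)]; ring
    rw [habs, abs_le] at hd
    -- v x ≥ v (-1) - (x + 1)
    rcases max_cases (v (-1)) (0 : ℝ) with ⟨he, _⟩ | ⟨he, _⟩ <;>
      rw [hp, he] at hxltp <;> linarith [hd.1]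
  have hsub2 : Ioo (max (1 - q) (-1)) (1 : ℝ) ⊆ {x ∈ Ioo (-1 : ℝ) 1 | 0 < v x} := by
    intro x hx
    obtain ⟨hx1, hx2⟩ := hx
    have hxgt1 : -1 < x := lt_of_le_of_lt (le_max_right _ _) hx1
    have hxgtq : 1 - q < x := lt_of_le_of_lt (le_max_left _ _) hx1
    have hxmem : x ∈ Icc (-1 : ℝ) 1 := ⟨hxgt1.le, hx2.le⟩
    refine ⟨⟨hxgt1, hx2⟩, ?_⟩
    have hd := hv.dist_le_mul x hxmem 1 hmem2
    rw [Real.dist_eq, Real.dist_eq, NNReal.coe_one, one_mul] at hd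
    have habs : |x - 1| = 1 - x := by rw [abs_sub_comm, abs_of_nonneg (by linarith)]
    rw [habs, abs_le] at hd
    rcases max_cases (v 1) (0 : ℝ) with ⟨he, _⟩ | ⟨he, _⟩ <;>
      rw [hq, he] at hxgtq <;> linarith [hd.1]
  have hbnd : v (-1) ≤ p := le_max_left _ _
  have hbnd' : v 1 ≤ q := le_max_left _ _
  by_contra hcon
  push_neg at hcon
  have hpq : α < p + q := by linarith
  rcases le_or_gt (p + q) 2 with hle | hgt
  · -- disjoint intervals, total measure p + q > α : contradiction
    have hp2 : p ≤ 2 := by linarith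
    have hq2 : q ≤ 2 := by linarith
    have hmin : min (-1 + p) 1 = -1 + p := min_eq_left (by linarith)
    have hmax : max (1 - q) (-1) = 1 - q := max_eq_left (by linarith)
    rw [hmin] at hsub1
    rw [hmax] at hsub2
    have hdisj : Disjoint (Ioo (-1 : ℝ) (-1 + p)) (Ioo (1 - q) (1 : ℝ)) := by
      rw [Set.disjoint_left]
      intro x hx hx'
      have := hx.2
      have := hx'.1
      linarith
    have hunion : Ioo (-1 : ℝ) (-1 + p) ∪ Ioo (1 - q) (1 : ℝ)
        ⊆ {x ∈ Ioo (-1 : ℝ) 1 | 0 < v x} := union_subset hsub1 hsub2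
    have hμ : volume (Ioo (-1 : ℝ) (-1 + p) ∪ Ioo (1 - q) (1 : ℝ))
        ≤ ENNReal.ofReal α := le_trans (measure_mono hunion) hvol
    rw [measure_union hdisj measurableSet_Ioo, Real.volume_Ioo, Real.volume_Ioo,
      ← ENNReal.ofReal_add (by linarith) (by linarith)] at hμ
    have : (-1 + p - -1) + (1 - (1 - q)) = p + q := by ring
    rw [this] at hμ
    have := (ENNReal.ofReal_le_ofReal_iff (by linarith)).mp hμ
    linarith
  · -- the whole interval is covered : measure ≥ 2 > α, contradiction
    have hcov : Ioo (-1 : ℝ) 1 ⊆ {x ∈ Ioo (-1 : ℝ) 1 | 0 < v x} := by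
      intro x hx
      rcases lt_or_ge x (-1 + p) with h | h
      · exact hsub1 ⟨hx.1, lt_min h hx.2⟩
      · apply hsub2
        refine ⟨max_lt (by linarith) hx.1, hx.2⟩
    have hμ : volume (Ioo (-1 : ℝ) 1) ≤ ENNReal.ofReal α :=
      le_trans (measure_mono hcov) hvol
    rw [Real.volume_Ioo] at hμ
    have h2 : (1 : ℝ) - -1 = 2 := by norm_num
    rw [h2] at hμ
    have := (ENNReal.ofReal_le_ofReal_iff (by linarith)).mp hμ
    linarith

/-- For every `t ∈ (0,1)`, `u_t` is `1`-Lipschitz, saturates the volume constraint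
`𝓛¹({u_t > 0} ∩ (−1,1)) = α`, has boundary values `u_t(−1) = tα`, `u_t(1) = (1−t)α`
summing to `α`, and hence maximizes `v ↦ A(v(−1) + v(1))` over admissible `v` for
every `A > 0`. Moreover distinct parameters `t` give distinct maximizers, so the
maximizer is not unique. -/
theorem one_dim_example_family_of_maximizers (α : ℝ) (hα0 : 0 < α) (hα2 : α < 2) :
    (∀ t ∈ Ioo (0 : ℝ) 1,
      LipschitzOnWith 1 (uEx α t) (Icc (-1) 1) ∧
      volume {x ∈ Ioo (-1 : ℝ) 1 | 0 < uEx α t x} = ENNReal.ofReal α ∧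
      uEx α t (-1) = t * α ∧ uEx α t 1 = (1 - t) * α ∧
      uEx α t (-1) + uEx α t 1 = α ∧
      ∀ A : ℝ, 0 < A → ∀ v : ℝ → ℝ,
        LipschitzOnWith 1 v (Icc (-1) 1) →
        volume {x ∈ Ioo (-1 : ℝ) 1 | 0 < v x} ≤ ENNReal.ofReal α →
        A * (v (-1) + v 1) ≤ A * (uEx α t (-1) + uEx α t 1)) ∧
    ∀ t ∈ Ioo (0 : ℝ) 1, ∀ t' ∈ Ioo (0 : ℝ) 1, t ≠ t' → uEx α t ≠ uEx α t' := by
  -- boundary values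
  have hbdry : ∀ t ∈ Ioo (0 : ℝ) 1,
      uEx α t (-1) = t * α ∧ uEx α t 1 = (1 - t) * α := by
    intro t ht
    obtain ⟨ht0, ht1⟩ := ht
    have htα : 0 < t * α := mul_pos ht0 hα0
    have htα2 : t * α < 2 := by nlinarith
    have h1t : 0 < (1 - t) * α := mul_pos (by linarith) hα0
    have h1t2 : (1 - t) * α < 2 := by nlinarith
    constructor
    · show max ((t * α - 1) - -1) 0 + max (-1 - (1 - (1 - t) * α)) 0 = t * α
      rw [max_eq_left (by linarith), max_eq_right (by linarith)]
      ring
    · show max ((t * α - 1) - 1) 0 + max (1 - (1 - (1 - t) * α)) 0 = (1 - t) * α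
      rw [max_eq_right (by linarith), max_eq_left (by linarith)]
      ring
  constructor
  · intro t ht
    obtain ⟨ht0, ht1⟩ := ht
    have htα : 0 < t * α := mul_pos ht0 hα0
    have htα2 : t * α < 2 := by nlinarith
    have h1t : 0 < (1 - t) * α := mul_pos (by linarith) hα0
    have h1t2 : (1 - t) * α < 2 := by nlinarith
    obtain ⟨hb1, hb2⟩ := hbdry t ⟨ht0, ht1⟩
    refine ⟨(uEx_lipschitz α t).lipschitzOnWith, ?_, hb1, hb2, ?_, ?_⟩
    · -- volume computation
      set a := t * α - 1 with ha
      set b := 1 - (1 - t) * α with hb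
      have hab : a < b := by simp only [ha, hb]; nlinarith
      have hseteq : {x ∈ Ioo (-1 : ℝ) 1 | 0 < uEx α t x}
          = Ioo (-1 : ℝ) a ∪ Ioo b 1 := by
        ext x
        simp only [mem_setOf_eq, mem_Ioo, mem_union, uEx, ← ha, ← hb]
        constructor
        · rintro ⟨⟨h1, h2⟩, h3⟩
          rcases lt_or_ge x a with h | h
          · exact Or.inl ⟨h1, h⟩
          · right
            refine ⟨?_, h2⟩
            by_contra hb'
            push_neg at hb'
            rw [max_eq_right (by linarith), max_eq_right (by linarith)] at h3
            linarith
        · rintro (⟨h1, h2⟩ | ⟨h1, h2⟩)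
          · refine ⟨⟨h1, by linarith⟩, ?_⟩
            have : 0 < max (a - x) 0 := lt_max_of_lt_left (by linarith)
            have := le_max_right (x - b) (0 : ℝ)
            linarith
          · refine ⟨⟨by linarith, h2⟩, ?_⟩
            have : 0 < max (x - b) 0 := lt_max_of_lt_left (by linarith)
            have := le_max_right (a - x) (0 : ℝ)
            linarith
      rw [hseteq]
      have hdisj : Disjoint (Ioo (-1 : ℝ) a) (Ioo b (1 : ℝ)) := by
        rw [Set.disjoint_left]
        intro x hx hx'
        have := hx.2
        have := hx'.1
        linarith
      rw [measure_union hdisj measurableSet_Ioo, Real.volume_Ioo, Real.volume_Ioo,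
        ← ENNReal.ofReal_add (by simp only [ha]; linarith) (by simp only [hb]; linarith)]
      congr 1
      simp only [ha, hb]
      ring
    · rw [hb1, hb2]; ring
    · intro A hA v hv hvol
      rw [hb1, hb2]
      have hsum := boundary_sum_le α hα0 hα2 v hv hvol
      have : t * α + (1 - t) * α = α := by ring
      rw [this]
      exact mul_le_mul_of_nonneg_left hsum hA.le
  · intro t ht t' ht' hne heq
    apply hne
    have h1 := (hbdry t ht).1
    have h2 := (hbdry t' ht').1
    rw [heq] at h1
    exact mul_right_cancel₀ hα0.ne' (h1.symm.trans h2)
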